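/- Downward closure of lax TeamLTL: for every LTL formula φ, if a team T satisfies φ under lax team semantics and S ⊆ T, then S satisfies φ under lax team semantics. -/
import Mathlib


/-- A trace over `AP`: an infinite sequence of sets of atomic propositions. -/
def Trace (AP : Type) := ℕ → Set AP

/-- The suffix `t[i,∞]` of a trace. -/
def Trace.shift {AP : Type} (t : Trace AP) (i : ℕ) : Trace AP := fun n => t (n + i)

/-- `T[f,∞] = {t[s,∞] | t ∈ T, s ∈ f(t)}`. -/
def teamShift {AP : Type} (T : Set (Trace AP)) (f : Trace AP → Set ℕ) : Set (Trace AP) :=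
  {s | ∃ t ∈ T, ∃ i ∈ f t, s = t.shift i}

/-- `f : T → 𝒫(ℕ)⁺`: assigns a nonempty set of time steps to every trace of the team. -/
def goodF {AP : Type} (T : Set (Trace AP)) (f : Trace AP → Set ℕ) : Prop :=
  ∀ t ∈ T, (f t).Nonempty

/-- The ordering `f' < f` on choice functions (on the domain `T'`). -/
def fLT {AP : Type} (T' : Set (Trace AP)) (f' f : Trace AP → Set ℕ) : Prop :=
  ∀ t ∈ T', sInf (f' t) ≤ sInf (f t) ∧
    ∀ m, IsGreatest (f t) m → ∃ m', IsGreatest (f' t) m' ∧ m' < m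

/-- Formulas of (NNF) LTL, extended with the Boolean disjunction `boolOr` (⊕)
and the Boolean negation `bNeg` (∼). -/
inductive TForm (AP : Type) where
  | pos : AP → TForm AP
  | neg : AP → TForm AP
  | and : TForm AP → TForm AP → TForm AP
  | or : TForm AP → TForm AP → TForm AP
  | boolOr : TForm AP → TForm AP → TForm AP
  | bNeg : TForm AP → TForm AP
  | next : TForm AP → TForm AP
  | glob : TForm AP → TForm AP
  | untl : TForm AP → TForm AP → TForm AP

/-- Plain LTL formulas (negation normal form; no ⊕, no ∼). -/
def TForm.isLTL {AP : Type} : TForm AP → Prop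
  | .pos _ => True
  | .neg _ => True
  | .and φ ψ => φ.isLTL ∧ ψ.isLTL
  | .or φ ψ => φ.isLTL ∧ ψ.isLTL
  | .boolOr _ _ => False
  | .bNeg _ => False
  | .next φ => φ.isLTL
  | .glob φ => φ.isLTL
  | .untl φ ψ => φ.isLTL ∧ ψ.isLTL

/-- TeamLTL(⊕) formulas: no Boolean negation. -/
def TForm.noBNeg {AP : Type} : TForm AP → Prop
  | .pos _ => True
  | .neg _ => True
  | .and φ ψ => φ.noBNeg ∧ ψ.noBNeg
  | .or φ ψ => φ.noBNeg ∧ ψ.noBNeg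
  | .boolOr φ ψ => φ.noBNeg ∧ ψ.noBNeg
  | .bNeg _ => False
  | .next φ => φ.noBNeg
  | .glob φ => φ.noBNeg
  | .untl φ ψ => φ.noBNeg ∧ ψ.noBNeg

/-- Ordinary single-trace LTL satisfaction (⊕ read as ∨ and ∼ as ¬). -/
def TForm.sat {AP : Type} : Trace AP → TForm AP → Prop
  | t, .pos p => p ∈ t 0
  | t, .neg p => p ∉ t 0
  | t, .and φ ψ => TForm.sat t φ ∧ TForm.sat t ψ
  | t, .or φ ψ => TForm.sat t φ ∨ TForm.sat t ψ
  | t, .boolOr φ ψ => TForm.sat t φ ∨ TForm.sat t ψ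
  | t, .bNeg φ => ¬ TForm.sat t φ
  | t, .next φ => TForm.sat (t.shift 1) φ
  | t, .glob φ => ∀ i, TForm.sat (t.shift i) φ
  | t, .untl φ ψ => ∃ i, TForm.sat (t.shift i) ψ ∧ ∀ j < i, TForm.sat (t.shift j) φ

/-- Lax team semantics of TeamLTL(⊕,∼). -/
def TForm.teamSat {AP : Type} : Set (Trace AP) → TForm AP → Prop
  | T, .pos p => ∀ t ∈ T, p ∈ t 0
  | T, .neg p => ∀ t ∈ T, p ∉ t 0
  | T, .and φ ψ => TForm.teamSat T φ ∧ TForm.teamSat T ψ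
  | T, .or φ ψ => ∃ T₁ T₂, T₁ ∪ T₂ = T ∧ TForm.teamSat T₁ φ ∧ TForm.teamSat T₂ ψ
  | T, .boolOr φ ψ => TForm.teamSat T φ ∨ TForm.teamSat T ψ
  | T, .bNeg φ => ¬ TForm.teamSat T φ
  | T, .next φ => TForm.teamSat (teamShift T (fun _ => {1})) φ
  | T, .glob φ => ∀ f, goodF T f → TForm.teamSat (teamShift T f) φ
  | T, .untl φ ψ => ∃ f, goodF T f ∧ TForm.teamSat (teamShift T f) ψ ∧
      ∀ f', goodF {t ∈ T | ¬ IsGreatest (f t) 0} f' →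
        fLT {t ∈ T | ¬ IsGreatest (f t) 0} f' f →
        ({t ∈ T | ¬ IsGreatest (f t) 0} = (∅ : Set (Trace AP)) ∨
          TForm.teamSat (teamShift {t ∈ T | ¬ IsGreatest (f t) 0} f') φ)

/-- HyperLTL formulas (quantifiers may occur anywhere). -/
inductive HForm (AP V : Type) where
  | atom : AP → V → HForm AP V
  | hnot : HForm AP V → HForm AP V
  | hand : HForm AP V → HForm AP V → HForm AP V
  | hor : HForm AP V → HForm AP V → HForm AP V
  | hnext : HForm AP V → HForm AP V
  | hglob : HForm AP V → HForm AP V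
  | huntl : HForm AP V → HForm AP V → HForm AP V
  | hall : V → HForm AP V → HForm AP V
  | hex : V → HForm AP V → HForm AP V

/-- Shift a trace assignment: `Π[i,∞]`. -/
def shiftA {AP V : Type} (A : V → Trace AP) (i : ℕ) : V → Trace AP := fun v => (A v).shift i

/-- HyperLTL satisfaction `Π ⊨_T φ`. -/
def HForm.hsat {AP V : Type} [DecidableEq V] :
    (V → Trace AP) → Set (Trace AP) → HForm AP V → Prop
  | A, _, .atom a v => a ∈ A v 0
  | A, T, .hnot φ => ¬ HForm.hsat A T φ
  | A, T, .hand φ ψ => HForm.hsat A T φ ∧ HForm.hsat A T ψ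
  | A, T, .hor φ ψ => HForm.hsat A T φ ∨ HForm.hsat A T ψ
  | A, T, .hnext φ => HForm.hsat (shiftA A 1) T φ
  | A, T, .hglob φ => ∀ i, HForm.hsat (shiftA A i) T φ
  | A, T, .huntl φ ψ => ∃ i, HForm.hsat (shiftA A i) T ψ ∧
      ∀ j < i, HForm.hsat (shiftA A j) T φ
  | A, T, .hall v φ => ∀ t ∈ T, HForm.hsat (Function.update A v t) T φ
  | A, T, .hex v φ => ∃ t ∈ T, HForm.hsat (Function.update A v t) T φ

/-- Quantifier-free HyperLTL formulas. -/
def HForm.QFree {AP V : Type} : HForm AP V → Prop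
  | .atom _ _ => True
  | .hnot φ => φ.QFree
  | .hand φ ψ => φ.QFree ∧ ψ.QFree
  | .hor φ ψ => φ.QFree ∧ ψ.QFree
  | .hnext φ => φ.QFree
  | .hglob φ => φ.QFree
  | .huntl φ ψ => φ.QFree ∧ ψ.QFree
  | .hall _ _ => False
  | .hex _ _ => False

/-- All trace variables occurring in a HyperLTL formula. -/
def HForm.vars {AP V : Type} : HForm AP V → Set V
  | .atom _ v => {v}
  | .hnot φ => φ.vars
  | .hand φ ψ => φ.vars ∪ ψ.vars
  | .hor φ ψ => φ.vars ∪ ψ.vars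
  | .hnext φ => φ.vars
  | .hglob φ => φ.vars
  | .huntl φ ψ => φ.vars ∪ ψ.vars
  | .hall v φ => insert v φ.vars
  | .hex v φ => insert v φ.vars

/-- Free trace variables of a HyperLTL formula. -/
def HForm.free {AP V : Type} : HForm AP V → Set V
  | .atom _ v => {v}
  | .hnot φ => φ.free
  | .hand φ ψ => φ.free ∪ ψ.free
  | .hor φ ψ => φ.free ∪ ψ.free
  | .hnext φ => φ.free
  | .hglob φ => φ.free
  | .huntl φ ψ => φ.free ∪ ψ.free
  | .hall v φ => φ.free \ {v}
  | .hex v φ => φ.free \ {v}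

/-- Rename the trace variables of a HyperLTL formula. -/
def HForm.rename {AP V : Type} (ρ : V → V) : HForm AP V → HForm AP V
  | .atom a v => .atom a (ρ v)
  | .hnot φ => .hnot (φ.rename ρ)
  | .hand φ ψ => .hand (φ.rename ρ) (ψ.rename ρ)
  | .hor φ ψ => .hor (φ.rename ρ) (ψ.rename ρ)
  | .hnext φ => .hnext (φ.rename ρ)
  | .hglob φ => .hglob (φ.rename ρ)
  | .huntl φ ψ => .huntl (φ.rename ρ) (ψ.rename ρ)
  | .hall v φ => .hall (ρ v) (φ.rename ρ)
  | .hex v φ => .hex (ρ v) (φ.rename ρ)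

/-- Hyperification `φ ↦ φ(π)`: replace each proposition `p` by `p_π`. -/
def TForm.hyperify {AP V : Type} (π : V) : TForm AP → HForm AP V
  | .pos p => .atom p π
  | .neg p => .hnot (.atom p π)
  | .and φ ψ => .hand (φ.hyperify π) (ψ.hyperify π)
  | .or φ ψ => .hor (φ.hyperify π) (ψ.hyperify π)
  | .boolOr φ ψ => .hor (φ.hyperify π) (ψ.hyperify π)
  | .bNeg φ => .hnot (φ.hyperify π)
  | .next φ => .hnext (φ.hyperify π)
  | .glob φ => .hglob (φ.hyperify π)
  | .untl φ ψ => .huntl (φ.hyperify π) (ψ.hyperify π)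

/-- A tautological NNF LTL formula. -/
def TForm.verum {AP : Type} [Inhabited AP] : TForm AP := .or (.pos default) (.neg default)

/-- Negation normal form of the (classical) negation of an NNF LTL formula. -/
def TForm.dual {AP : Type} [Inhabited AP] : TForm AP → TForm AP
  | .pos p => .neg p
  | .neg p => .pos p
  | .and φ ψ => .or φ.dual ψ.dual
  | .or φ ψ => .and φ.dual ψ.dual
  | .boolOr φ ψ => .and φ.dual ψ.dual
  | .bNeg φ => φ
  | .next φ => .next φ.dual
  | .glob φ => .untl TForm.verum φ.dual
  | .untl φ ψ => .or (.glob ψ.dual) (.untl ψ.dual (.and φ.dual ψ.dual))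

/-- The shorthand `∃β := ∼β^d`. -/
def TForm.tExists {AP : Type} [Inhabited AP] (β : TForm AP) : TForm AP := .bNeg β.dual

mutual
/-- Erase trace-variable subscripts: turn a quantifier-free HyperLTL formula into
an (NNF) LTL formula, pushing classical negations inward. -/
def deH {AP V : Type} [Inhabited AP] : HForm AP V → TForm AP
  | .atom a _ => .pos a
  | .hnot φ => deHn φ
  | .hand φ ψ => .and (deH φ) (deH ψ)
  | .hor φ ψ => .or (deH φ) (deH ψ)
  | .hnext φ => .next (deH φ)
  | .hglob φ => .glob (deH φ)
  | .huntl φ ψ => .untl (deH φ) (deH ψ)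
  | .hall _ φ => deH φ
  | .hex _ φ => deH φ

/-- NNF of the negation of an erased quantifier-free HyperLTL formula. -/
def deHn {AP V : Type} [Inhabited AP] : HForm AP V → TForm AP
  | .atom a _ => .neg a
  | .hnot φ => deH φ
  | .hand φ ψ => .or (deHn φ) (deHn ψ)
  | .hor φ ψ => .and (deHn φ) (deHn ψ)
  | .hnext φ => .next (deHn φ)
  | .hglob φ => .untl TForm.verum (deHn φ)
  | .huntl φ ψ => .or (.glob (deHn ψ)) (.untl (deHn ψ) (.and (deHn φ) (deHn ψ)))
  | .hall _ φ => deHn φ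
  | .hex _ φ => deHn φ
end

/-- `φ₀ ∨ φ₁ ∨ ⋯ ∨ φₘ` for a nonempty family of HyperLTL formulas. -/
def HForm.bigOrF {AP V : Type} {m : ℕ} (f : Fin (m + 1) → HForm AP V) : HForm AP V :=
  (List.ofFn fun i : Fin m => f i.succ).foldr .hor (f 0)

/-- `φ₀ ∧ φ₁ ∧ ⋯ ∧ φₘ` for a nonempty family of HyperLTL formulas. -/
def HForm.bigAndF {AP V : Type} {m : ℕ} (f : Fin (m + 1) → HForm AP V) : HForm AP V :=
  (List.ofFn fun i : Fin m => f i.succ).foldr .hand (f 0)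

/-- `φ₀ ⊕ φ₁ ⊕ ⋯ ⊕ φₘ` for a nonempty family of team formulas. -/
def TForm.bigBoolOrF {AP : Type} {m : ℕ} (f : Fin (m + 1) → TForm AP) : TForm AP :=
  (List.ofFn fun i : Fin m => f i.succ).foldr .boolOr (f 0)

/-- `φ₀ ∧ φ₁ ∧ ⋯ ∧ φₘ` for a nonempty family of team formulas. -/
def TForm.bigAndF {AP : Type} {m : ℕ} (f : Fin (m + 1) → TForm AP) : TForm AP :=
  (List.ofFn fun i : Fin m => f i.succ).foldr .and (f 0)

/-- Apply a quantifier block (`true` = ∀, `false` = ∃). -/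
def applyBlock {AP V : Type} (qs : List (Bool × V)) (φ : HForm AP V) : HForm AP V :=
  qs.foldr (fun q acc => if q.1 then .hall q.2 acc else .hex q.2 acc) φ

/-- The dual of a quantifier block. -/
def dualBlock {V : Type} (qs : List (Bool × V)) : List (Bool × V) :=
  qs.map fun q => (!q.1, q.2)

lemma teamShift_mono {AP : Type} {S T : Set (Trace AP)} {f g : Trace AP → Set ℕ}
    (hST : S ⊆ T) (hfg : ∀ t ∈ S, f t ⊆ g t) : teamShift S f ⊆ teamShift T g := by
  rintro s ⟨t, ht, i, hi, rfl⟩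
  exact ⟨t, hST ht, i, hfg t ht hi, rfl⟩

/-- Downward closure of lax TeamLTL. -/
theorem teamLTL_downward_closed {AP : Type} (φ : TForm AP) (hφ : φ.isLTL)
    (T S : Set (Trace AP)) (hT : TForm.teamSat T φ) (hS : S ⊆ T) :
    TForm.teamSat S φ := by
  induction φ generalizing T S with
  | pos p => exact fun t ht => hT t (hS ht)
  | neg p => exact fun t ht => hT t (hS ht)
  | and φ ψ ihφ ihψ =>
    exact ⟨ihφ hφ.1 T S hT.1 hS, ihψ hφ.2 T S hT.2 hS⟩
  | or φ ψ ihφ ihψ =>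
    obtain ⟨T₁, T₂, hU, h1, h2⟩ := hT
    refine ⟨T₁ ∩ S, T₂ ∩ S, ?_, ihφ hφ.1 T₁ _ h1 Set.inter_subset_left,
      ihψ hφ.2 T₂ _ h2 Set.inter_subset_left⟩
    rw [← Set.union_inter_distrib_right, hU]
    exact Set.inter_eq_right.mpr hS
  | boolOr φ ψ ihφ ihψ => exact hφ.elim
  | bNeg φ ih => exact hφ.elim
  | next φ ih =>
    exact ih hφ _ _ hT (teamShift_mono hS (fun _ _ => subset_rfl))
  | glob φ ih =>
    intro f hf
    classical
    set g : Trace AP → Set ℕ := fun t => if t ∈ S then f t else {0} with hg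
    have hgood : goodF T g := by
      intro t ht
      by_cases h : t ∈ S <;> simp [g, h]
      exact hf t h
    refine ih hφ _ _ (hT g hgood) (teamShift_mono hS (fun t ht => ?_))
    simp [g, ht]
  | untl φ ψ ihφ ihψ =>
    obtain ⟨f, hf, hψ, hind⟩ := hT
    refine ⟨f, fun t ht => hf t (hS ht),
      ihψ hφ.2 _ _ hψ (teamShift_mono hS (fun _ _ => subset_rfl)), ?_⟩
    intro f' hf' hlt
    classical
    set S' : Set (Trace AP) := {t ∈ S | ¬ IsGreatest (f t) 0} with hS'
    set T' : Set (Trace AP) := {t ∈ T | ¬ IsGreatest (f t) 0} with hT'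
    have hsub : S' ⊆ T' := fun t ht => ⟨hS ht.1, ht.2⟩
    set g : Trace AP → Set ℕ := fun t => if t ∈ S' then f' t else {0} with hg
    have hgood : goodF T' g := by
      intro t ht
      by_cases h : t ∈ S' <;> simp [g, h]
      exact hf' t h
    have hglt : fLT T' g f := by
      intro t ht
      by_cases h : t ∈ S'
      · simpa [g, h] using hlt t h
      · have h0 : sInf (g t) = 0 := by simp [g, h]
        constructor
        · simp [h0]
        · intro m hm
          refine ⟨0, by simp [g, h, IsGreatest, upperBounds], ?_⟩
          rcases Nat.eq_zero_or_pos m with hz | hp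
          · exact absurd (hz ▸ hm) ht.2
          · exact hp
    rcases hind g hgood hglt with he | hsat
    · left
      rw [Set.eq_empty_iff_forall_notMem]
      intro t ht
      exact absurd (hsub ht) (by rw [he]; exact Set.notMem_empty t)
    · right
      refine ihφ hφ.1 _ _ hsat (teamShift_mono hsub (fun t ht => ?_))
      simp [g, ht]
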